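/- Let n be an integer, c a real constant, and r ≠ 0 a real number. With g_n(Θ,φ) := exp((nφ/2)·k)·exp(−(Θ/2)·j)·exp(−(nφ/2)·k) and q_n(Θ,φ) := sin Θ cos(nφ)·i + sin Θ sin(nφ)·j + cos Θ·k, the dτ-component Ã_τ := (n/2)(c − 1/r)·q_n(Θ,φ) of the Charap–Duff connection transforms as: g_n(Θ,φ) · Ã_τ · g_n(Θ,φ)⁻¹ = (n/2)(c − 1/r)·k, for all real Θ, φ. -/

import Mathlib

open scoped Quaternion

/-- The imaginary unit `i` of the real quaternions. -/
def qi : ℍ[ℝ] := ⟨0, 1, 0, 0⟩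

/-- The imaginary unit `j` of the real quaternions. -/
def qj : ℍ[ℝ] := ⟨0, 0, 1, 0⟩

/-- The imaginary unit `k` of the real quaternions. -/
def qk : ℍ[ℝ] := ⟨0, 0, 0, 1⟩

/-- The gauge transformation `g_n(Θ,φ) = exp((nφ/2)k)·exp(−(Θ/2)j)·exp(−(nφ/2)k)`. -/
noncomputable def gaugeG (n : ℤ) (Θ φ : ℝ) : ℍ[ℝ] :=
  NormedSpace.exp ((n * φ / 2 : ℝ) • qk) * NormedSpace.exp ((-(Θ / 2) : ℝ) • qj) *
    NormedSpace.exp ((-(n * φ / 2) : ℝ) • qk)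

/-- The Charap–Duff field `q_n(Θ,φ) = sin Θ cos(nφ)·i + sin Θ sin(nφ)·j + cos Θ·k`. -/
noncomputable def charapDuffQ (n : ℤ) (Θ φ : ℝ) : ℍ[ℝ] :=
  (Real.sin Θ * Real.cos (n * φ)) • qi + (Real.sin Θ * Real.sin (n * φ)) • qj
    + Real.cos Θ • qk

/-!
Conjugation `v ↦ exp (t u) v exp (-t u)` by a unit imaginary quaternion `u` fixes `u` and rotates
the plane orthogonal to `u` through the angle `2t`. Conjugating `k` by `exp ((Θ/2) j)` therefore
tilts it to `sin Θ i + cos Θ k`, and conjugating that by `exp ((nφ/2) k)` turns its `i`-component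
through the angle `nφ`, giving `q_n`. Since `k` commutes with `exp ((nφ/2) k)`, this says
`q_n = g_n⁻¹ k g_n`.
-/

open NormedSpace

theorem algebraMap_cos_add_sin_smul_conj {A : Type*} [Ring A] [Algebra ℝ A] {u v : A}
    (hu : u * u = -1) (huv : u * v = -(v * u)) (t : ℝ) :
    (algebraMap ℝ A (Real.cos t) + Real.sin t • u) * v *
        (algebraMap ℝ A (Real.cos (-t)) + Real.sin (-t) • u) =
      Real.cos (2 * t) • v + Real.sin (2 * t) • (u * v) := by
  have hvu : v * u = -(u * v) := by rw [huv, neg_neg]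
  have huvu : u * v * u = v := by rw [huv, neg_mul, mul_assoc, hu, mul_neg_one, neg_neg]
  simp only [Real.cos_neg, Real.sin_neg, Algebra.algebraMap_eq_smul_one, add_mul, mul_add,
    smul_mul_assoc, mul_smul_comm, one_mul, mul_one, huvu, hvu, Real.cos_two_mul',
    Real.sin_two_mul]
  module

namespace Quaternion

theorem mul_self_eq_neg_one_of_re_eq_zero {u : ℍ[ℝ]} (hu : u.re = 0) (hu1 : ‖u‖ = 1) :
    u * u = -1 := by
  rw [← neg_neg (u * u), ← mul_neg, ← star_eq_neg.mpr hu, self_mul_star,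
    normSq_eq_norm_mul_self, hu1, mul_one, coe_one]

theorem exp_smul_of_re_eq_zero {u : ℍ[ℝ]} (hu : u.re = 0) (hu1 : ‖u‖ = 1) (t : ℝ) :
    exp (t • u) = algebraMap ℝ ℍ[ℝ] (Real.cos t) + Real.sin t • u := by
  have hsinc : Real.sin |t| / |t| * t = Real.sin t := by
    rcases eq_or_ne t 0 with rfl | ht
    · simp
    rcases abs_cases t with ⟨h, -⟩ | ⟨h, -⟩ <;> rw [h] <;> field_simp
    rw [Real.sin_neg, neg_neg]
  rw [exp_of_re_eq_zero _ (by simp [hu]), norm_smul, hu1, mul_one, Real.norm_eq_abs,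
    Real.cos_abs, smul_smul, hsinc, algebraMap_def]

theorem exp_smul_mul_mul_exp_neg_smul {u v : ℍ[ℝ]} (hu : u.re = 0) (hu1 : ‖u‖ = 1)
    (huv : u * v = -(v * u)) (t : ℝ) :
    exp (t • u) * v * exp ((-t) • u) = Real.cos (2 * t) • v + Real.sin (2 * t) • (u * v) := by
  rw [exp_smul_of_re_eq_zero hu hu1, exp_smul_of_re_eq_zero hu hu1]
  exact algebraMap_cos_add_sin_smul_conj (mul_self_eq_neg_one_of_re_eq_zero hu hu1) huv t

theorem exp_smul_mul_mul_exp_neg_smul_self (u : ℍ[ℝ]) (t : ℝ) :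
    exp (t • u) * u * exp ((-t) • u) = u := by
  let +nondep : NormedAlgebra ℚ ℍ[ℝ] := .restrictScalars ℚ ℝ ℍ[ℝ]
  simpa [neg_smul] using ((Commute.refl u).smul_right t).neg_right.exp_neg_mul_mul_exp_eq_self

theorem exp_neg_smul_mul_exp_smul_mul (u x : ℍ[ℝ]) (t : ℝ) :
    exp ((-t) • u) * (exp (t • u) * x) = x := by
  let +nondep : NormedAlgebra ℚ ℍ[ℝ] := .restrictScalars ℚ ℝ ℍ[ℝ]
  rw [← mul_assoc, ← exp_add_of_commute ((Commute.refl u).smul_left _ |>.smul_right _),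
    neg_smul, neg_add_cancel, exp_zero, one_mul]

theorem exp_ne_zero (q : ℍ[ℝ]) : exp q ≠ 0 :=
  let +nondep : NormedAlgebra ℚ ℍ[ℝ] := .restrictScalars ℚ ℝ ℍ[ℝ]
  (isUnit_exp q).ne_zero

end Quaternion

@[simp] lemma qi_re : qi.re = 0 := rfl
@[simp] lemma qi_imI : qi.imI = 1 := rfl
@[simp] lemma qi_imJ : qi.imJ = 0 := rfl
@[simp] lemma qi_imK : qi.imK = 0 := rfl
@[simp] lemma qj_re : qj.re = 0 := rfl
@[simp] lemma qj_imI : qj.imI = 0 := rfl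
@[simp] lemma qj_imJ : qj.imJ = 1 := rfl
@[simp] lemma qj_imK : qj.imK = 0 := rfl
@[simp] lemma qk_re : qk.re = 0 := rfl
@[simp] lemma qk_imI : qk.imI = 0 := rfl
@[simp] lemma qk_imJ : qk.imJ = 0 := rfl
@[simp] lemma qk_imK : qk.imK = 1 := rfl

lemma norm_qj : ‖qj‖ = 1 := by
  rw [← pow_eq_one_iff_of_nonneg (norm_nonneg _) two_ne_zero, sq,
    ← Quaternion.normSq_eq_norm_mul_self, Quaternion.normSq_def']
  simp

lemma norm_qk : ‖qk‖ = 1 := by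
  rw [← pow_eq_one_iff_of_nonneg (norm_nonneg _) two_ne_zero, sq,
    ← Quaternion.normSq_eq_norm_mul_self, Quaternion.normSq_def']
  simp

lemma qj_mul_qk : qj * qk = qi := by
  ext <;> simp [Quaternion.re_mul, Quaternion.imI_mul, Quaternion.imJ_mul, Quaternion.imK_mul]

lemma qk_mul_qi : qk * qi = qj := by
  ext <;> simp [Quaternion.re_mul, Quaternion.imI_mul, Quaternion.imJ_mul, Quaternion.imK_mul]

lemma qk_mul_qj : qk * qj = -qi := by
  ext <;> simp [Quaternion.re_mul, Quaternion.imI_mul, Quaternion.imJ_mul, Quaternion.imK_mul]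

lemma qi_mul_qk : qi * qk = -qj := by
  ext <;> simp [Quaternion.re_mul, Quaternion.imI_mul, Quaternion.imJ_mul, Quaternion.imK_mul]


theorem charapDuffQ_eq_conj (n : ℤ) (Θ φ : ℝ) :
    charapDuffQ n Θ φ = exp ((n * φ / 2 : ℝ) • qk) *
      (exp ((Θ / 2) • qj) * qk * exp ((-(Θ / 2)) • qj)) * exp ((-(n * φ / 2) : ℝ) • qk) := by
  have hjk : qj * qk = -(qk * qj) := by rw [qj_mul_qk, qk_mul_qj, neg_neg]
  have hki : qk * qi = -(qi * qk) := by rw [qk_mul_qi, qi_mul_qk, neg_neg]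
  rw [Quaternion.exp_smul_mul_mul_exp_neg_smul qj_re norm_qj hjk, qj_mul_qk, mul_add, add_mul,
    mul_smul_comm, smul_mul_assoc, mul_smul_comm, smul_mul_assoc,
    Quaternion.exp_smul_mul_mul_exp_neg_smul_self,
    Quaternion.exp_smul_mul_mul_exp_neg_smul qk_re norm_qk hki, qk_mul_qi,
    mul_div_cancel₀ _ two_ne_zero, mul_div_cancel₀ _ two_ne_zero, charapDuffQ]
  module

theorem gaugeG_mul_charapDuffQ (n : ℤ) (Θ φ : ℝ) :
    gaugeG n Θ φ * charapDuffQ n Θ φ = qk * gaugeG n Θ φ := by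
  rw [charapDuffQ_eq_conj, gaugeG]
  simp only [mul_assoc, Quaternion.exp_neg_smul_mul_exp_smul_mul]
  rw [← mul_assoc, ← mul_assoc qk, ((Commute.refl qk).smul_left _).exp_left.eq]

theorem gaugeG_ne_zero (n : ℤ) (Θ φ : ℝ) : gaugeG n Θ φ ≠ 0 :=
  mul_ne_zero (mul_ne_zero (Quaternion.exp_ne_zero _) (Quaternion.exp_ne_zero _))
    (Quaternion.exp_ne_zero _)

theorem gauge_transforms_tau_component_general (n : ℤ) (c : ℝ) (r : ℝ) (Θ φ : ℝ) :
    gaugeG n Θ φ * (((n : ℝ) / 2 * (c - 1 / r)) • charapDuffQ n Θ φ) * (gaugeG n Θ φ)⁻¹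
      = ((n : ℝ) / 2 * (c - 1 / r)) • qk := by
  rw [mul_inv_eq_iff_eq_mul₀ (gaugeG_ne_zero n Θ φ), mul_smul_comm, smul_mul_assoc,
    gaugeG_mul_charapDuffQ]

/-- The `dτ`-component `Ã_τ = (n/2)(c − 1/r)·q_n` of the Charap–Duff connection is
transformed by pure conjugation with `g_n` into the Abelian potential
`(n/2)(c − 1/r)·k`. -/
theorem gauge_transforms_tau_component (n : ℤ) (c : ℝ) (r : ℝ) (hr : r ≠ 0) (Θ φ : ℝ) :
    gaugeG n Θ φ * (((n : ℝ) / 2 * (c - 1 / r)) • charapDuffQ n Θ φ) * (gaugeG n Θ φ)⁻¹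
      = ((n : ℝ) / 2 * (c - 1 / r)) • qk :=
  gauge_transforms_tau_component_general n c r Θ φ
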